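/- arXiv:1805.01807 — 2 statements merged into one kernel-verified Lean document; each statement's English description precedes it below -/
import Mathlib

section
/- For a rank-one projection P = |φ⟩⟨φ| with φ a unit vector, and a positive (self-adjoint, nonnegative) trace-class operator γ with Tr γ = 1, setting a := ⟨φ,(1-γ)φ⟩, one has Tr|γ - P| ≤ 2√(2a) = 2√(2⟨φ, (1-γ)φ⟩). -/
open scoped InnerProductSpace

noncomputable section

set_option synthInstance.maxHeartbeats 1000000
set_option maxHeartbeats 2000000
set_option linter.unusedSectionVars false

variable {H : Type*} [NormedAddCommGroup H] [InnerProductSpace ℂ H] [CompleteSpace H]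

/-- The rank-one orthogonal projection `|φ⟩⟨φ| : x ↦ ⟪φ, x⟫ φ`. -/
def rankOne (φ : H) : H →L[ℂ] H := (innerSL ℂ φ).smulRight φ

section AuxLemmas

variable {ι : Type*}

lemma sa_inner_move {X : H →L[ℂ] H} (hX : IsSelfAdjoint X) (x y : H) :
    ⟪X x, y⟫_ℂ = ⟪x, X y⟫_ℂ :=
  (ContinuousLinearMap.isSelfAdjoint_iff_isSymmetric.mp hX) x y

lemma nonneg_of_re {X : H →L[ℂ] H} (hX : IsSelfAdjoint X)
    (h : ∀ x : H, 0 ≤ (⟪x, X x⟫_ℂ).re) : 0 ≤ X := by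
  rw [ContinuousLinearMap.nonneg_iff_isPositive]
  refine ⟨ContinuousLinearMap.isSelfAdjoint_iff_isSymmetric.mp hX, fun x => ?_⟩
  have : ⟪X x, x⟫_ℂ = ⟪x, X x⟫_ℂ := sa_inner_move hX x x
  simpa [ContinuousLinearMap.reApplyInnerSelf, this] using h x

lemma re_of_nonneg {X : H →L[ℂ] H} (hX : 0 ≤ X) (x : H) : 0 ≤ (⟪x, X x⟫_ℂ).re := by
  rw [ContinuousLinearMap.nonneg_iff_isPositive] at hX
  have := hX.2 x
  have h2 : ⟪X x, x⟫_ℂ = ⟪x, X x⟫_ℂ := hX.1 x x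
  simpa [ContinuousLinearMap.reApplyInnerSelf, h2] using this

lemma parseval_sq (b : HilbertBasis ι ℂ H) (y : H) :
    (Summable fun i => ‖⟪b i, y⟫_ℂ‖ ^ 2) ∧ ∑' i, ‖⟪b i, y⟫_ℂ‖ ^ 2 = ‖y‖ ^ 2 := by
  have hs := b.summable_inner_mul_inner y y
  have ht := b.tsum_inner_mul_inner y y
  have hterm : ∀ i, ⟪y, b i⟫_ℂ * ⟪b i, y⟫_ℂ = ((‖⟪b i, y⟫_ℂ‖ ^ 2 : ℝ) : ℂ) := by
    intro i
    simp only [← inner_conj_symm (b i) y, RCLike.mul_conj, RCLike.norm_conj]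
    norm_cast
  have hs' : Summable fun i => ‖⟪b i, y⟫_ℂ‖ ^ 2 := by
    have := (Complex.reCLM.summable hs)
    simp only [Complex.reCLM_apply, hterm, Complex.ofReal_re] at this
    exact this
  constructor
  · exact hs'
  · have : ((∑' i, ‖⟪b i, y⟫_ℂ‖ ^ 2 : ℝ) : ℂ) = ⟪y, y⟫_ℂ := by
      rw [← ht]
      rw [Complex.ofReal_tsum]
      exact tsum_congr fun i => (hterm i).symm
    have h2 := congrArg Complex.re this
    rw [Complex.ofReal_re] at h2
    rw [h2, ← inner_self_eq_norm_sq (𝕜 := ℂ) y]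
    rfl

lemma apply_norm_sq_le (b : HilbertBasis ι ℂ H) {S : H →L[ℂ] H} (hS : IsSelfAdjoint S)
    (hsum : Summable fun i => ‖S (b i)‖ ^ 2) (y : H) :
    ‖S y‖ ^ 2 ≤ (∑' i, ‖S (b i)‖ ^ 2) * ‖y‖ ^ 2 := by
  obtain ⟨hs, ht⟩ := parseval_sq b (S y)
  rw [← ht]
  have hle : ∀ i, ‖⟪b i, S y⟫_ℂ‖ ^ 2 ≤ ‖S (b i)‖ ^ 2 * ‖y‖ ^ 2 := by
    intro i
    rw [← sa_inner_move hS (b i) y]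
    calc ‖⟪S (b i), y⟫_ℂ‖ ^ 2 ≤ (‖S (b i)‖ * ‖y‖) ^ 2 := by
          have := norm_inner_le_norm (𝕜 := ℂ) (S (b i)) y
          exact pow_le_pow_left₀ (norm_nonneg _) this 2
      _ = ‖S (b i)‖ ^ 2 * ‖y‖ ^ 2 := by ring
  calc ∑' i, ‖⟪b i, S y⟫_ℂ‖ ^ 2 ≤ ∑' i, ‖S (b i)‖ ^ 2 * ‖y‖ ^ 2 :=
        Summable.tsum_le_tsum hle hs (by simpa using hsum.mul_right (‖y‖ ^ 2))
    _ = (∑' i, ‖S (b i)‖ ^ 2) * ‖y‖ ^ 2 := tsum_mul_right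

lemma gamma_bounds (b : HilbertBasis ι ℂ H) (γ : H →L[ℂ] H)
    (hγ_sa : IsSelfAdjoint γ)
    (hγ_pos : ∀ x : H, 0 ≤ (⟪x, γ x⟫_ℂ).re)
    (hγ_sum : Summable fun i => (⟪b i, γ (b i)⟫_ℂ).re)
    (hγ_tr : ∑' i, (⟪b i, γ (b i)⟫_ℂ).re = 1) :
    (∀ y : H, (⟪y, γ y⟫_ℂ).re ≤ ‖y‖ ^ 2) ∧ (∀ x : H, ‖γ x‖ ^ 2 ≤ (⟪x, γ x⟫_ℂ).re) := by
  have hγ0 : 0 ≤ γ := nonneg_of_re hγ_sa hγ_pos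
  set S := CFC.sqrt γ with hSdef
  have hS0 : 0 ≤ S := CFC.sqrt_nonneg γ
  have hS_sa : IsSelfAdjoint S := IsSelfAdjoint.of_nonneg hS0
  have hSS : S * S = γ := CFC.sqrt_mul_sqrt_self γ hγ0
  have happ : ∀ x : H, γ x = S (S x) := by
    intro x; rw [← hSS]; rfl
  have key : ∀ x : H, ‖S x‖ ^ 2 = (⟪x, γ x⟫_ℂ).re := by
    intro x
    have h1 : ⟪S x, S x⟫_ℂ = ⟪x, γ x⟫_ℂ := by
      rw [sa_inner_move hS_sa, happ x]
    rw [← inner_self_eq_norm_sq (𝕜 := ℂ) (S x), h1]; rfl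
  have hsum' : Summable fun i => ‖S (b i)‖ ^ 2 := by
    simp only [key]; exact hγ_sum
  have htr' : ∑' i, ‖S (b i)‖ ^ 2 = 1 := by
    simp only [key]; exact hγ_tr
  have le1 : ∀ y : H, (⟪y, γ y⟫_ℂ).re ≤ ‖y‖ ^ 2 := by
    intro y
    have := apply_norm_sq_le b hS_sa hsum' y
    rw [htr', one_mul] at this
    rw [← key y]; exact this
  refine ⟨le1, fun x => ?_⟩
  calc ‖γ x‖ ^ 2 = ‖S (S x)‖ ^ 2 := by rw [happ x]
    _ = (⟪S x, γ (S x)⟫_ℂ).re := key (S x)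
    _ ≤ ‖S x‖ ^ 2 := le1 (S x)
    _ = (⟪x, γ x⟫_ℂ).re := key x

lemma hs_bound (b : HilbertBasis ι ℂ H) (φ : H) (hφ : ‖φ‖ = 1) (γ : H →L[ℂ] H)
    (hγ_sa : IsSelfAdjoint γ)
    (hγ_pos : ∀ x : H, 0 ≤ (⟪x, γ x⟫_ℂ).re)
    (hγ_sum : Summable fun i => (⟪b i, γ (b i)⟫_ℂ).re)
    (hγ_tr : ∑' i, (⟪b i, γ (b i)⟫_ℂ).re = 1) :
    (Summable fun i => ‖(γ - rankOne φ) (b i)‖ ^ 2) ∧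
      ∑' i, ‖(γ - rankOne φ) (b i)‖ ^ 2 ≤ 2 * (1 - (⟪φ, γ φ⟫_ℂ).re) := by
  obtain ⟨hle1, hsq⟩ := gamma_bounds b γ hγ_sa hγ_pos hγ_sum hγ_tr
  set f : ι → ℝ := fun i => ‖γ (b i)‖ ^ 2 with hf
  set g : ι → ℝ := fun i => (⟪φ, b i⟫_ℂ * ⟪b i, γ φ⟫_ℂ).re with hg
  set h : ι → ℝ := fun i => ‖⟪b i, φ⟫_ℂ‖ ^ 2 with hh
  have hexp : ∀ i, ‖(γ - rankOne φ) (b i)‖ ^ 2 = f i - 2 * g i + h i := by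
    intro i
    have happ : (γ - rankOne φ) (b i) = γ (b i) - ⟪φ, b i⟫_ℂ • φ := by
      simp [rankOne, ContinuousLinearMap.sub_apply]
    rw [happ, @norm_sub_sq ℂ]
    have h1 : ⟪γ (b i), ⟪φ, b i⟫_ℂ • φ⟫_ℂ = ⟪φ, b i⟫_ℂ * ⟪b i, γ φ⟫_ℂ := by
      rw [inner_smul_right, sa_inner_move hγ_sa]
    have h2 : ‖⟪φ, b i⟫_ℂ • φ‖ ^ 2 = h i := by
      rw [norm_smul, hφ, mul_one, hh]
      rw [norm_inner_symm φ (b i)]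
    rw [h1, h2, hf]
    rfl
  -- summability of the three pieces
  have hfs : Summable f := by
    apply Summable.of_nonneg_of_le (fun i => by positivity) (fun i => hsq (b i)) hγ_sum
  have hft : ∑' i, f i ≤ 1 := by
    rw [← hγ_tr]
    exact Summable.tsum_le_tsum (fun i => hsq (b i)) hfs hγ_sum
  have hgsC := b.summable_inner_mul_inner φ (γ φ)
  have hgs : Summable g := by
    have := Complex.reCLM.summable hgsC
    exact this
  have hgt : ∑' i, g i = (⟪φ, γ φ⟫_ℂ).re := by
    have := congrArg Complex.re (b.tsum_inner_mul_inner φ (γ φ))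
    rw [← this]
    exact (Complex.reCLM.map_tsum hgsC).symm
  obtain ⟨hhs, hht⟩ := parseval_sq b φ
  have hht1 : ∑' i, h i = 1 := by rw [hht, hφ]; norm_num
  constructor
  · simp only [hexp]
    exact ((hfs.sub (hgs.mul_left 2)).add hhs)
  · have hsplit : ∑' i, ‖(γ - rankOne φ) (b i)‖ ^ 2
        = (∑' i, f i) - 2 * (∑' i, g i) + ∑' i, h i := by
      simp only [hexp]
      rw [Summable.tsum_add (hfs.sub (hgs.mul_left 2)) hhs,
        Summable.tsum_sub hfs (hgs.mul_left 2), tsum_mul_left]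
    rw [hsplit, hgt, hht1]
    nlinarith [hft]

end AuxLemmas

/-- For a rank-one projection `P = |φ⟩⟨φ|` with `φ` a unit vector, and a
self-adjoint nonnegative trace-class operator `γ` with `Tr γ = 1`, the trace
norm `Tr|γ - P|` (encoded via `T = |γ - P|`, i.e. a nonnegative self-adjoint
operator with `T² = (γ-P)² `) satisfies `Tr|γ - P| ≤ 2 √(2 a)`, where
`a = ⟪φ, (1 - γ) φ⟫ = 1 - ⟪φ, γ φ⟫`. -/
theorem stmt4 {ι : Type*} (b : HilbertBasis ι ℂ H)
    (φ : H) (hφ : ‖φ‖ = 1)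
    (γ T : H →L[ℂ] H)
    (hγ_sa : IsSelfAdjoint γ)
    (hγ_pos : ∀ x : H, 0 ≤ (⟪x, γ x⟫_ℂ).re)
    (hγ_sum : Summable fun i => (⟪b i, γ (b i)⟫_ℂ).re)
    (hγ_tr : ∑' i, (⟪b i, γ (b i)⟫_ℂ).re = 1)
    (hT_sa : IsSelfAdjoint T)
    (hT_pos : ∀ x : H, 0 ≤ (⟪x, T x⟫_ℂ).re)
    (hT_sq : T ∘L T = (γ - rankOne φ) ∘L (γ - rankOne φ))
    (hT_sum : Summable fun i => (⟪b i, T (b i)⟫_ℂ).re) :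
    ∑' i, (⟪b i, T (b i)⟫_ℂ).re
      ≤ 2 * Real.sqrt (2 * (1 - (⟪φ, γ φ⟫_ℂ).re)) := by
  have sqrt_nonneg' : 0 ≤ 2 * Real.sqrt (2 * (1 - (⟪φ, γ φ⟫_ℂ).re)) := by positivity
  -- P is self-adjoint
  have hP_sa : IsSelfAdjoint (rankOne φ : H →L[ℂ] H) := by
    rw [ContinuousLinearMap.isSelfAdjoint_iff_isSymmetric]
    intro x y
    show ⟪(rankOne φ) x, y⟫_ℂ = ⟪x, (rankOne φ) y⟫_ℂ
    simp only [rankOne, ContinuousLinearMap.smulRight_apply, innerSL_apply_apply,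
      inner_smul_left, inner_smul_right, ← inner_conj_symm φ x]
    rw [Complex.conj_conj]; ring
  set A : H →L[ℂ] H := γ - rankOne φ with hAdef
  have hA_sa : IsSelfAdjoint A := hγ_sa.sub hP_sa
  have hT0 : 0 ≤ T := nonneg_of_re hT_sa hT_pos
  have hTT : T * T = A * A := hT_sq
  -- T = cfc |·| A
  have habs_sq : cfc (fun x : ℝ => |x|) A * cfc (fun x : ℝ => |x|) A = A * A := by
    rw [← cfc_mul (fun x : ℝ => |x|) (fun x : ℝ => |x|) A]
    calc cfc (fun x : ℝ => |x| * |x|) A = cfc (fun x : ℝ => x * x) A :=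
          cfc_congr fun x _ => abs_mul_abs_self x
      _ = A * A := by rw [cfc_mul (fun x : ℝ => x) (fun x : ℝ => x) A, cfc_id' ℝ A]
  have habs0 : 0 ≤ cfc (fun x : ℝ => |x|) A := cfc_nonneg fun x _ => abs_nonneg x
  have hT_cfc : T = cfc (fun x : ℝ => |x|) A := by
    rw [← CFC.sqrt_unique hTT hT0, ← CFC.sqrt_unique habs_sq habs0]
  -- N = T - A = cfc (|x| - x) A, M = T + A = cfc (|x| + x) A
  set N : H →L[ℂ] H := T - A with hNdef
  set M : H →L[ℂ] H := T + A with hMdef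
  have hN_cfc : N = cfc (fun x : ℝ => |x| - x) A := by
    rw [hNdef, hT_cfc, cfc_sub (fun x : ℝ => |x|) (fun x : ℝ => x) A (by fun_prop) (by fun_prop), cfc_id' ℝ A]
  have hM_cfc : M = cfc (fun x : ℝ => |x| + x) A := by
    rw [hMdef, hT_cfc, cfc_add (a := A) (f := fun x : ℝ => |x|) (g := fun x : ℝ => x) (by fun_prop) (by fun_prop), cfc_id' ℝ A]
  have hN0 : 0 ≤ N := by
    rw [hN_cfc]; exact cfc_nonneg fun x _ => sub_nonneg.mpr (le_abs_self x)
  have hN_sa : IsSelfAdjoint N := IsSelfAdjoint.of_nonneg hN0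
  have hMN : M * N = 0 := by
    rw [hN_cfc, hM_cfc, ← cfc_mul (fun x : ℝ => |x| + x) (fun x : ℝ => |x| - x) A]
    calc cfc (fun x : ℝ => (|x| + x) * (|x| - x)) A = cfc (fun _ : ℝ => (0 : ℝ)) A :=
          cfc_congr fun x _ => by
            have := abs_mul_abs_self x; nlinarith [abs_mul_abs_self x]
      _ = 0 := cfc_const_zero ℝ A
  -- R with R * R = N
  set R : H →L[ℂ] H := cfc (fun x : ℝ => Real.sqrt (|x| - x)) A with hRdef
  have hR_sa : IsSelfAdjoint R := cfc_predicate _ A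
  have hRR : R * R = N := by
    rw [hRdef, hN_cfc, ← cfc_mul (fun x : ℝ => Real.sqrt (|x| - x))
      (fun x : ℝ => Real.sqrt (|x| - x)) A]
    exact cfc_congr fun x _ => Real.mul_self_sqrt (sub_nonneg.mpr (le_abs_self x))
  -- Key kernel lemma
  have key : ∀ v : H, ⟪φ, N v⟫_ℂ = 0 → N v = 0 := by
    intro v hv
    set u : H := N v with hu
    have hMu : M u = 0 := by
      rw [hu, ← ContinuousLinearMap.mul_apply, hMN]; rfl
    have hTAu : T u + A u = 0 := by
      have : (T + A) u = 0 := hMu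
      simpa using this
    have hNu : N u = T u - A u := by simp [hNdef]
    have hre : (⟪u, N u⟫_ℂ).re = -(2 * (⟪u, A u⟫_ℂ).re) := by
      have hTu : T u = -(A u) := by linear_combination (norm := abel) hTAu
      rw [hNu, hTu]
      simp [inner_sub_right, inner_neg_right]
      ring
    have hAu_re : (⟪u, A u⟫_ℂ).re = (⟪u, γ u⟫_ℂ).re := by
      have : A u = γ u - ⟪φ, u⟫_ℂ • φ := by
        simp [hAdef, rankOne, ContinuousLinearMap.sub_apply]
      rw [this, inner_sub_right, inner_smul_right, hv]
      simp
    have hNu_nonneg : (⟪u, N u⟫_ℂ).re = ‖R u‖ ^ 2 := by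
      have : N u = R (R u) := by rw [← hRR]; rfl
      rw [this, ← sa_inner_move hR_sa]
      rw [← inner_self_eq_norm_sq (𝕜 := ℂ) (R u)]; rfl
    have hRu : ‖R u‖ ^ 2 ≤ 0 := by
      rw [← hNu_nonneg, hre, hAu_re]
      have := hγ_pos u
      linarith
    have hRu0 : R u = 0 := by
      have : ‖R u‖ = 0 := by nlinarith [norm_nonneg (R u), sq_nonneg ‖R u‖]
      exact norm_eq_zero.mp this
    have hNu0 : N u = 0 := by
      have : N u = R (R u) := by rw [← hRR]; rfl
      rw [this, hRu0, map_zero]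
    have : ‖N v‖ ^ 2 = 0 := by
      rw [← inner_self_eq_norm_sq (𝕜 := ℂ) (N v)]
      have : ⟪N v, N v⟫_ℂ = ⟪v, N (N v)⟫_ℂ := sa_inner_move hN_sa v (N v)
      rw [this, ← hu, hNu0, inner_zero_right]
      simp
    exact norm_eq_zero.mp (pow_eq_zero_iff two_ne_zero |>.mp this)
  -- trace of P over the basis
  have hPterm : ∀ i, (⟪b i, (rankOne φ) (b i)⟫_ℂ).re = ‖⟪b i, φ⟫_ℂ‖ ^ 2 := by
    intro i
    have h0 : (rankOne φ) (b i) = ⟪φ, b i⟫_ℂ • φ := by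
      simp [rankOne]
    rw [h0, inner_smul_right, ← inner_conj_symm φ (b i), RCLike.conj_mul]
    norm_cast
  obtain ⟨hPsum, hPtr0⟩ := parseval_sq b φ
  have hPtr : ∑' i, ‖⟪b i, φ⟫_ℂ‖ ^ 2 = 1 := by rw [hPtr0, hφ]; norm_num
  -- trace of A is zero
  have hAterm : ∀ i, (⟪b i, A (b i)⟫_ℂ).re
      = (⟪b i, γ (b i)⟫_ℂ).re - ‖⟪b i, φ⟫_ℂ‖ ^ 2 := by
    intro i
    have h0 : A (b i) = γ (b i) - (rankOne φ) (b i) := rfl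
    rw [h0, inner_sub_right, Complex.sub_re, hPterm i]
  have hAsum : Summable (fun i => (⟪b i, A (b i)⟫_ℂ).re) := by
    simp only [hAterm]; exact hγ_sum.sub hPsum
  have hAtr : ∑' i, (⟪b i, A (b i)⟫_ℂ).re = 0 := by
    simp only [hAterm]; rw [Summable.tsum_sub hγ_sum hPsum, hγ_tr, hPtr]; ring
  -- trace of N
  have hNterm : ∀ i, (⟪b i, N (b i)⟫_ℂ).re
      = (⟪b i, T (b i)⟫_ℂ).re - (⟪b i, A (b i)⟫_ℂ).re := by
    intro i
    have h0 : N (b i) = T (b i) - A (b i) := rfl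
    rw [h0, inner_sub_right, Complex.sub_re]
  have hNsum : Summable (fun i => (⟪b i, N (b i)⟫_ℂ).re) := by
    simp only [hNterm]; exact hT_sum.sub hAsum
  have hTsplit : ∑' i, (⟪b i, T (b i)⟫_ℂ).re = ∑' i, (⟪b i, N (b i)⟫_ℂ).re := by
    calc ∑' i, (⟪b i, T (b i)⟫_ℂ).re
        = ∑' i, ((⟪b i, N (b i)⟫_ℂ).re + (⟪b i, A (b i)⟫_ℂ).re) := by
          refine tsum_congr fun i => ?_
          rw [hNterm i]; ring
      _ = ∑' i, (⟪b i, N (b i)⟫_ℂ).re + ∑' i, (⟪b i, A (b i)⟫_ℂ).re :=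
          Summable.tsum_add hNsum hAsum
      _ = ∑' i, (⟪b i, N (b i)⟫_ℂ).re := by rw [hAtr]; ring
  by_cases hNzero : N = 0
  · rw [hTsplit, hNzero]
    simpa using sqrt_nonneg'
  · -- N ≠ 0 : extract the rank-one structure
    have hv0 : ∃ v, N v ≠ 0 := by
      by_contra h
      push_neg at h
      exact hNzero (ContinuousLinearMap.ext fun v => by simp [h v])
    obtain ⟨v₀, hv₀⟩ := hv0
    set w' : H := N v₀ with hw'def
    have hφw : ⟪φ, w'⟫_ℂ ≠ 0 := fun h => hv₀ (key v₀ h)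
    have hrep : ∀ v : H, ⟪φ, w'⟫_ℂ • N v = ⟪φ, N v⟫_ℂ • w' := by
      intro v
      have h1 : ⟪φ, w'⟫_ℂ • N v - ⟪φ, N v⟫_ℂ • w'
          = N (⟪φ, w'⟫_ℂ • v - ⟪φ, N v⟫_ℂ • v₀) := by
        rw [map_sub, map_smul, map_smul, hw'def]
      have h2 : ⟪φ, N (⟪φ, w'⟫_ℂ • v - ⟪φ, N v⟫_ℂ • v₀)⟫_ℂ = 0 := by
        rw [← h1, inner_sub_right, inner_smul_right, inner_smul_right]
        ring
      have h3 := key _ h2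
      rw [← h1] at h3
      exact sub_eq_zero.mp h3
    have hw'norm : ‖w'‖ ≠ 0 := norm_ne_zero_iff.mpr hv₀
    set w : H := ((‖w'‖⁻¹ : ℝ) : ℂ) • w' with hwdef
    have hwnorm : ‖w‖ = 1 := by
      rw [hwdef, norm_smul, Complex.norm_real, Real.norm_eq_abs,
        abs_of_nonneg (by positivity)]
      field_simp
    have hw'w : w' = ((‖w'‖ : ℝ) : ℂ) • w := by
      rw [hwdef, smul_smul]
      rw [← Complex.ofReal_mul, mul_inv_cancel₀ hw'norm]
      simp
    have hww : ⟪w, w⟫_ℂ = 1 := by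
      rw [inner_self_eq_norm_sq_to_K, hwnorm]
      norm_num
    -- N v = ⟪w, N v⟫ • w
    have hrepw : ∀ v : H, N v = ⟪w, N v⟫_ℂ • w := by
      intro v
      have h1 : N v = ((⟪φ, w'⟫_ℂ)⁻¹ * ⟪φ, N v⟫_ℂ) • w' := by
        have := congrArg (fun z : H => (⟪φ, w'⟫_ℂ)⁻¹ • z) (hrep v)
        simpa only [smul_smul, inv_mul_cancel₀ hφw, one_smul] using this
      set d : ℂ := (⟪φ, w'⟫_ℂ)⁻¹ * ⟪φ, N v⟫_ℂ with hd
      rw [hw'w, smul_smul] at h1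
      have h3 : ⟪w, N v⟫_ℂ = d * ((‖w'‖ : ℝ) : ℂ) := by
        rw [h1, inner_smul_right, hww, mul_one]
      rw [h3, h1]
    set lc : ℂ := ⟪w, N w⟫_ℂ with hlc
    have hlc_conj : (starRingEnd ℂ) lc = lc := by
      calc (starRingEnd ℂ) lc = ⟪N w, w⟫_ℂ := inner_conj_symm (N w) w
        _ = ⟪w, N w⟫_ℂ := sa_inner_move hN_sa w w
        _ = lc := rfl
    have hlc_re : lc = ((lc.re : ℝ) : ℂ) := (Complex.conj_eq_iff_re.mp hlc_conj).symm
    have hNinner : ∀ v : H, ⟪w, N v⟫_ℂ = lc * ⟪w, v⟫_ℂ := by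
      intro v
      calc ⟪w, N v⟫_ℂ = ⟪N w, v⟫_ℂ := (sa_inner_move hN_sa w v).symm
        _ = ⟪⟪w, N w⟫_ℂ • w, v⟫_ℂ := by rw [← hrepw w]
        _ = (starRingEnd ℂ) lc * ⟪w, v⟫_ℂ := by rw [inner_smul_left, hlc]
        _ = lc * ⟪w, v⟫_ℂ := by rw [hlc_conj]
    have hNbi : ∀ i, (⟪b i, N (b i)⟫_ℂ).re
        = lc.re * (⟪w, b i⟫_ℂ * ⟪b i, w⟫_ℂ).re := by
      intro i
      rw [hrepw (b i), inner_smul_right, hNinner (b i)]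
      calc (lc * ⟪w, b i⟫_ℂ * ⟪b i, w⟫_ℂ).re
          = (((lc.re : ℝ) : ℂ) * (⟪w, b i⟫_ℂ * ⟪b i, w⟫_ℂ)).re := by
            rw [← hlc_re, mul_assoc]
        _ = lc.re * (⟪w, b i⟫_ℂ * ⟪b i, w⟫_ℂ).re := by
            rw [Complex.re_ofReal_mul]
    have hwsum := b.summable_inner_mul_inner w w
    have hwtr : ∑' i, (⟪w, b i⟫_ℂ * ⟪b i, w⟫_ℂ).re = 1 := by
      have h1 : ∑' i, (⟪w, b i⟫_ℂ * ⟪b i, w⟫_ℂ).re = (⟪w, w⟫_ℂ).re := by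
        rw [← b.tsum_inner_mul_inner w w]
        exact (Complex.reCLM.map_tsum hwsum).symm
      rw [h1, hww]
      norm_num
    have hNtr : ∑' i, (⟪b i, N (b i)⟫_ℂ).re = lc.re := by
      simp only [hNbi]
      rw [tsum_mul_left, hwtr, mul_one]
    -- M w = 0 and hence N w = -(A w + A w)
    have hMw' : M w' = 0 := by
      rw [hw'def, ← ContinuousLinearMap.mul_apply, hMN]; rfl
    have hMw : M w = 0 := by rw [hwdef, map_smul, hMw', smul_zero]
    have hTAw : T w + A w = 0 := by
      have : (T + A) w = 0 := hMw
      simpa using this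
    have hTw : T w = -(A w) := by linear_combination (norm := abel) hTAw
    have hNw : N w = T w - A w := by simp [hNdef]
    have hlcre : lc.re = -(2 * (⟪w, A w⟫_ℂ).re) := by
      rw [hlc, hNw, hTw, inner_sub_right, inner_neg_right]
      simp
      ring
    -- the Hilbert-Schmidt bound
    obtain ⟨hAsq_sum, hAsq_tr⟩ := hs_bound b φ hφ γ hγ_sa hγ_pos hγ_sum hγ_tr
    have hAw_sq : ‖A w‖ ^ 2 ≤ 2 * (1 - (⟪φ, γ φ⟫_ℂ).re) := by
      have h1 := apply_norm_sq_le b hA_sa hAsq_sum w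
      rw [hwnorm] at h1
      calc ‖A w‖ ^ 2 ≤ (∑' i, ‖A (b i)‖ ^ 2) * 1 ^ 2 := h1
        _ = ∑' i, ‖A (b i)‖ ^ 2 := by ring
        _ ≤ 2 * (1 - (⟪φ, γ φ⟫_ℂ).re) := hAsq_tr
    have hAw_le : ‖A w‖ ≤ Real.sqrt (2 * (1 - (⟪φ, γ φ⟫_ℂ).re)) := by
      have := Real.sqrt_le_sqrt hAw_sq
      rwa [Real.sqrt_sq (norm_nonneg _)] at this
    have hlc_le : lc.re ≤ 2 * ‖A w‖ := by
      have h1 : -(⟪w, A w⟫_ℂ).re ≤ ‖⟪w, A w⟫_ℂ‖ := by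
        have := Complex.abs_re_le_norm ⟪w, A w⟫_ℂ
        have h2 : |(⟪w, A w⟫_ℂ).re| ≤ ‖⟪w, A w⟫_ℂ‖ := by
          simpa using this
        linarith [neg_abs_le (⟪w, A w⟫_ℂ).re]
      have h3 : ‖⟪w, A w⟫_ℂ‖ ≤ ‖A w‖ := by
        have := norm_inner_le_norm (𝕜 := ℂ) w (A w)
        rwa [hwnorm, one_mul] at this
      rw [hlcre]
      linarith
    rw [hTsplit, hNtr]
    calc lc.re ≤ 2 * ‖A w‖ := hlc_le
      _ ≤ 2 * Real.sqrt (2 * (1 - (⟪φ, γ φ⟫_ℂ).re)) := by linarith [hAw_le]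

end
end

section
/- The Hilbert–Schmidt norm of γ - P, where P is a rank-one projection onto a unit vector φ and γ is a nonnegative trace-class operator of trace 1, satisfies ‖γ - P‖_{HS}² ≤ 2⟨φ, (1 - γ)φ⟩. -/
/-!
Expanding the square vector by vector gives
`∑ᵢ ‖(γ - P) bᵢ‖² = ∑ᵢ ‖γ bᵢ‖² - 2 re ⟪φ, γ φ⟫ + 1`, so it suffices that `∑ᵢ ‖γ bᵢ‖² ≤ Tr γ = 1`.
This holds term by term, `‖γ bᵢ‖² ≤ ⟪bᵢ, γ bᵢ⟫`, since by Parseval and the Cauchy–Schwarz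
inequality for the positive form `⟪·, γ ·⟫`,
`‖γ x‖² = ∑ⱼ |⟪bⱼ, γ x⟫|² ≤ ∑ⱼ ⟪bⱼ, γ bⱼ⟫ ⟪x, γ x⟫ = Tr γ · ⟪x, γ x⟫`.
-/

open scoped InnerProductSpace

noncomputable section

variable {H : Type*} [NormedAddCommGroup H] [InnerProductSpace ℂ H] [CompleteSpace H]

section General

open RCLike

variable {𝕜 E ι : Type*} [RCLike 𝕜] [NormedAddCommGroup E] [InnerProductSpace 𝕜 E]

theorem ContinuousLinearMap.IsPositive.norm_inner_apply_sq_le {T : E →L[𝕜] E} (hT : T.IsPositive)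
    (x y : E) : ‖⟪x, T y⟫_𝕜‖ ^ 2 ≤ re ⟪x, T x⟫_𝕜 * re ⟪y, T y⟫_𝕜 := by
  let form : PreInnerProductSpace.Core 𝕜 E :=
    { inner := fun u v => ⟪u, T v⟫_𝕜
      conj_inner_symm := fun u v => by
        simp only [inner_conj_symm, hT.inner_left_eq_inner_right]
      re_inner_nonneg := hT.re_inner_nonneg_right
      add_left := fun u v w => inner_add_left u v (T w)
      smul_left := fun u v r => inner_smul_left u (T v) r }
  have h : ‖⟪x, T y⟫_𝕜‖ * ‖⟪y, T x⟫_𝕜‖ ≤ re ⟪x, T x⟫_𝕜 * re ⟪y, T y⟫_𝕜 :=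
    @InnerProductSpace.Core.inner_mul_inner_self_le 𝕜 E _ _ _ form x y
  have hswap : ‖⟪y, T x⟫_𝕜‖ = ‖⟪x, T y⟫_𝕜‖ := by
    rw [← hT.inner_left_eq_inner_right, ← inner_conj_symm, RCLike.norm_conj]
  rwa [hswap, ← sq] at h

theorem HilbertBasis.hasSum_norm_inner_sq (b : HilbertBasis ι 𝕜 E) (x : E) :
    HasSum (fun i => ‖⟪b i, x⟫_𝕜‖ ^ 2) (‖x‖ ^ 2) := by
  have h := RCLike.hasSum_re 𝕜 (b.hasSum_inner_mul_inner x x)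
  simp only [← inner_conj_symm x (b _), RCLike.conj_mul, inner_self_eq_norm_sq_to_K] at h
  exact_mod_cast h

theorem ContinuousLinearMap.IsPositive.norm_apply_sq_le_tsum_mul {T : E →L[𝕜] E}
    (hT : T.IsPositive) (b : HilbertBasis ι 𝕜 E)
    (hsum : Summable fun i => re ⟪b i, T (b i)⟫_𝕜) (x : E) :
    ‖T x‖ ^ 2 ≤ (∑' i, re ⟪b i, T (b i)⟫_𝕜) * re ⟪x, T x⟫_𝕜 := by
  rw [← tsum_mul_right]
  exact hasSum_le (fun i => hT.norm_inner_apply_sq_le (b i) x)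
    (b.hasSum_norm_inner_sq (T x)) (hsum.mul_right _).hasSum

end General

section RankOne

variable {E ι : Type*} [NormedAddCommGroup E] [InnerProductSpace ℂ E]

theorem rankOne_apply (φ x : E) : rankOne φ x = ⟪φ, x⟫_ℂ • φ := rfl

theorem norm_sub_rankOne_apply_sq {T : E →L[ℂ] E} (hT : (T : E →ₗ[ℂ] E).IsSymmetric)
    (φ x : E) :
    ‖(T - rankOne φ) x‖ ^ 2 =
      ‖T x‖ ^ 2 - 2 * (⟪φ, x⟫_ℂ * ⟪x, T φ⟫_ℂ).re + ‖⟪φ, x⟫_ℂ‖ ^ 2 * ‖φ‖ ^ 2 := by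
  rw [sub_apply, rankOne_apply, norm_sub_sq (𝕜 := ℂ), inner_smul_right, norm_smul,
    mul_pow, show ⟪T x, φ⟫_ℂ = ⟪x, T φ⟫_ℂ from hT x φ]
  rfl

theorem HilbertBasis.hasSum_norm_sub_rankOne_apply_sq (b : HilbertBasis ι ℂ E) {T : E →L[ℂ] E}
    (hT : (T : E →ₗ[ℂ] E).IsSymmetric) (hHS : Summable fun i => ‖T (b i)‖ ^ 2) (φ : E) :
    HasSum (fun i => ‖(T - rankOne φ) (b i)‖ ^ 2)
      ((∑' i, ‖T (b i)‖ ^ 2) - 2 * (⟪φ, T φ⟫_ℂ).re + ‖φ‖ ^ 4) := by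
  have hcross := Complex.hasSum_re (b.hasSum_inner_mul_inner φ (T φ))
  have hproj : HasSum (fun i => ‖⟪φ, b i⟫_ℂ‖ ^ 2) (‖φ‖ ^ 2) := by
    simpa only [← inner_conj_symm φ (b _), RCLike.norm_conj] using b.hasSum_norm_inner_sq φ
  rw [show ‖φ‖ ^ 4 = ‖φ‖ ^ 2 * ‖φ‖ ^ 2 by ring]
  simpa only [norm_sub_rankOne_apply_sq hT] using
    (hHS.hasSum.sub (hcross.mul_left 2)).add (hproj.mul_right (‖φ‖ ^ 2))

end RankOne

/-- For a unit vector `φ`, `P = |φ⟩⟨φ|`, and a self-adjoint nonnegative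
trace-class operator `γ` with `Tr γ = 1`, the Hilbert–Schmidt norm (computed
via any Hilbert basis `b`) satisfies `‖γ - P‖_HS² ≤ 2 (1 - ⟪φ, γ φ⟫)`. -/
theorem stmt5 {ι : Type*} (b : HilbertBasis ι ℂ H)
    (φ : H) (hφ : ‖φ‖ = 1)
    (γ : H →L[ℂ] H)
    (hγ_sa : IsSelfAdjoint γ)
    (hγ_pos : ∀ x : H, 0 ≤ (⟪x, γ x⟫_ℂ).re)
    (hγ_sum : Summable fun i => (⟪b i, γ (b i)⟫_ℂ).re)
    (hγ_tr : ∑' i, (⟪b i, γ (b i)⟫_ℂ).re = 1) :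
    ∑' i, ‖(γ - rankOne φ) (b i)‖ ^ 2 ≤ 2 * (1 - (⟪φ, γ φ⟫_ℂ).re) := by
  have hγ : γ.IsPositive := (γ.isPositive_def').2
    ⟨hγ_sa, fun x => (hγ_pos x).trans_eq (inner_re_symm (𝕜 := ℂ) _ _)⟩
  have hdiag (i : ι) : ‖γ (b i)‖ ^ 2 ≤ (⟪b i, γ (b i)⟫_ℂ).re := by
    simpa only [RCLike.re_to_complex, hγ_tr, one_mul] using
      hγ.norm_apply_sq_le_tsum_mul b hγ_sum (b i)
  have hHS : Summable fun i => ‖γ (b i)‖ ^ 2 :=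
    hγ_sum.of_nonneg_of_le (fun _ => by positivity) hdiag
  have hHS_le : ∑' i, ‖γ (b i)‖ ^ 2 ≤ 1 := hγ_tr ▸ hHS.tsum_le_tsum hdiag hγ_sum
  rw [(b.hasSum_norm_sub_rankOne_apply_sq hγ.isSymmetric hHS φ).tsum_eq, hφ]
  linarith

end
end
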